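/- arXiv:2203.16712 — 7 statements merged into one kernel-verified Lean document; each statement's English description precedes it below -/
import Mathlib

section
/- For any finite simple graph G (irreflexive symmetric relation on a finite vertex set): if G has an odd closed walk of length p and G admits a cyclic polymorphism of arity p, then G has a loop, i.e., some vertex adjacent to itself. Consequently, a finite simple (loopless) graph that admits cyclic polymorphisms of arbitrarily large prime arities is bipartite. -/
/-- A cyclic polymorphism of arity `p` of a graph `Adj`. -/
def IsCyclicPolymorphism {V : Type*} (Adj : V → V → Prop) (p : ℕ) (c : (ZMod p → V) → V) : Prop :=
  (∀ x y : ZMod p → V, (∀ i, Adj (x i) (y i)) → Adj (c x) (c y)) ∧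
  (∀ x : ZMod p → V, c (fun i => x (i + 1)) = c x)

/-- A closed walk of length `p` in the graph `Adj`. -/
def IsClosedWalk {V : Type*} (Adj : V → V → Prop) (p : ℕ) (x : ZMod p → V) : Prop :=
  ∀ i, Adj (x i) (x (i + 1))

/-! A closed walk `x` of length `p` is coordinatewise adjacent to its rotation, so a cyclic
polymorphism `c` makes `c x` adjacent to `c (rotate x) = c x`: a loop. A loopless graph that is not
bipartite has an odd closed walk, which can be padded by back-and-forth steps to any larger odd
length, in particular to a large prime `p`; a cyclic polymorphism of arity `p` would then produce
a loop. -/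

theorem IsCyclicPolymorphism.adj_self {V : Type*} {Adj : V → V → Prop} {p : ℕ}
    {c : (ZMod p → V) → V} (hc : IsCyclicPolymorphism Adj p c) {x : ZMod p → V}
    (hx : IsClosedWalk Adj p x) : Adj (c x) (c x) := by
  simpa only [hc.2] using hc.1 x (fun i => x (i + 1)) hx

namespace SimpleGraph

variable {V : Type*} {G : SimpleGraph V}

theorem Walk.exists_length_eq_add_two_mul {u v : V} (w : G.Walk u v) (hw : ¬ w.Nil) (k : ℕ) :
    ∃ w' : G.Walk u v, w'.length = w.length + 2 * k := by
  induction k with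
  | zero => exact ⟨w, rfl⟩
  | succ k ih =>
    obtain ⟨w', hw'⟩ := ih
    exact ⟨.cons (w.adj_snd hw) (.cons (w.adj_snd hw).symm w'), by
      simp only [Walk.length_cons]; omega⟩

theorem Walk.isClosedWalk_getVert {u : V} (w : G.Walk u u) {p : ℕ} [NeZero p]
    (hp : w.length = p) : IsClosedWalk G.Adj p fun i => w.getVert i.val := by
  intro i
  have hi : i.val < p := ZMod.val_lt i
  have hsucc : (i + 1).val = (i.val + 1) % p := by
    rw [← ZMod.val_natCast, Nat.cast_add_one, ZMod.natCast_zmod_val]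
  have hwrap : w.getVert ((i.val + 1) % p) = w.getVert (i.val + 1) := by
    rcases (show i.val + 1 ≤ p from hi).lt_or_eq with h | h
    · rw [Nat.mod_eq_of_lt h]
    · rw [h, Nat.mod_self, w.getVert_zero, w.getVert_of_length_le hp.le]
  dsimp only
  rw [hsucc, hwrap]
  exact w.adj_getVert_succ (hp ▸ hi)

theorem exists_isClosedWalk_of_not_isBipartite (hG : ¬ G.IsBipartite) :
    ∃ N, ∀ p, N ≤ p → Odd p → ∃ x : ZMod p → V, IsClosedWalk G.Adj p x := by
  obtain ⟨u, w, hw⟩ : ∃ u, ∃ w : G.Walk u u, Odd w.length := by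
    simpa [two_colorable_iff_forall_loop_even] using hG
  refine ⟨w.length, fun p hle hp => ?_⟩
  obtain ⟨k, hk⟩ := (Nat.Odd.sub_odd hp hw).two_dvd
  have hnil : ¬ w.Nil := fun h => by simp [h.length_eq_zero] at hw
  obtain ⟨w', hw'⟩ := w.exists_length_eq_add_two_mul hnil k
  have : NeZero p := NeZero.of_pos hp.pos
  exact ⟨_, w'.isClosedWalk_getVert (by omega)⟩

end SimpleGraph

theorem cyclic_polymorphism_loop_and_bipartite_general {V : Type*}
    (Adj : V → V → Prop) (hsymm : ∀ u v, Adj u v → Adj v u) :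
    (∀ p : ℕ, 0 < p → Odd p →
      (∃ x : ZMod p → V, IsClosedWalk Adj p x) →
      (∃ c, IsCyclicPolymorphism Adj p c) →
      ∃ v, Adj v v) ∧
    ((∀ v, ¬ Adj v v) →
      (∀ N : ℕ, ∃ p : ℕ, N ≤ p ∧ p.Prime ∧ ∃ c, IsCyclicPolymorphism Adj p c) →
      ∃ f : V → Bool, ∀ u v, Adj u v → f u ≠ f v) := by
  refine ⟨fun p _ _ ⟨x, hx⟩ ⟨c, hc⟩ => ⟨c x, hc.adj_self hx⟩, fun hloop hprimes => ?_⟩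
  let G : SimpleGraph V := ⟨Adj, ⟨hsymm⟩, ⟨hloop⟩⟩
  have hbip : G.IsBipartite := by
    by_contra hG
    obtain ⟨N, hN⟩ := G.exists_isClosedWalk_of_not_isBipartite hG
    obtain ⟨p, hNp, hp, c, hc⟩ := hprimes (max N 3)
    obtain ⟨x, hx⟩ := hN p (le_of_max_le_left hNp) (hp.odd_of_ne_two (by omega))
    exact hloop _ (hc.adj_self hx)
  obtain ⟨c⟩ := hbip
  exact ⟨fun v => finTwoEquiv (c v), fun u v h => finTwoEquiv.injective.ne (c.valid h)⟩

/-- If a finite graph has an odd closed walk of length `p` and a cyclic polymorphism of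
arity `p`, then it has a loop.  Consequently a finite loopless (simple) graph admitting
cyclic polymorphisms of arbitrarily large prime arities is bipartite. -/
theorem cyclic_polymorphism_loop_and_bipartite {V : Type*} [Fintype V]
    (Adj : V → V → Prop) (hsymm : ∀ u v, Adj u v → Adj v u) :
    (∀ p : ℕ, 0 < p → Odd p →
      (∃ x : ZMod p → V, IsClosedWalk Adj p x) →
      (∃ c, IsCyclicPolymorphism Adj p c) →
      ∃ v, Adj v v) ∧
    ((∀ v, ¬ Adj v v) →
      (∀ N : ℕ, ∃ p : ℕ, N ≤ p ∧ p.Prime ∧ ∃ c, IsCyclicPolymorphism Adj p c) →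
      ∃ f : V → Bool, ∀ u v, Adj u v → f u ≠ f v) :=
  cyclic_polymorphism_loop_and_bipartite_general Adj hsymm
end

section
/- Let D be a finite relational structure that is a core (every homomorphism D → D is an automorphism), and let c ∈ D. Define H(x₁,...,xₙ) to hold iff the map d ↦ x_d is an endomorphism of D (where D = {1,...,n} and c = 1). Then for all a, b ∈ D: there exist x₂,...,xₙ with H(a,x₂,...,xₙ) and H(b,x₂,...,xₙ) if and only if a = b and some automorphism of D sends c to a. -/
def IsEndo {D : Type*} {ι : Type*} {ar : ι → ℕ}
    (Rel : ∀ i, Set (Fin (ar i) → D)) (g : D → D) : Prop :=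
  ∀ i, ∀ t ∈ Rel i, (g ∘ t) ∈ Rel i

open Function

/-- A preimage `d` of `a` under `update x c b` is either `c`, or a point off `c` that
`update x c a` identifies with `c`. -/
theorem eq_of_injective_update_of_surjective_update {α β : Type*} [DecidableEq α]
    {x : α → β} {c : α} {a b : β}
    (hinj : Injective (update x c a)) (hsurj : Surjective (update x c b)) : a = b := by
  obtain ⟨d, hd⟩ := hsurj a
  by_cases hdc : d = c
  · rw [hdc, update_self] at hd
    exact hd.symm
  · rw [update_of_ne hdc] at hd
    have hdc' : update x c a d = update x c a c := by
      rw [update_of_ne hdc, update_self, hd]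
    exact absurd (hinj hdc') hdc

theorem core_eq_c_simple_definition_general {D : Type*} [DecidableEq D]
    {ι : Type*} {ar : ι → ℕ} (Rel : ∀ i, Set (Fin (ar i) → D))
    (hcore : ∀ g : D → D, IsEndo Rel g → Function.Bijective g)
    (c : D) (a b : D) :
    (∃ x : D → D, IsEndo Rel (Function.update x c a) ∧ IsEndo Rel (Function.update x c b))
      ↔ (a = b ∧ ∃ f : D → D, IsEndo Rel f ∧ Function.Bijective f ∧ f c = a) := by
  constructor
  · rintro ⟨x, hxa, hxb⟩
    have hbij := hcore _ hxa
    exact ⟨eq_of_injective_update_of_surjective_update hbij.1 (hcore _ hxb).2,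
      update x c a, hxa, hbij, update_self c a x⟩
  · rintro ⟨rfl, f, hf, -, rfl⟩
    exact ⟨f, by rwa [update_eq_self], by rwa [update_eq_self]⟩

/-- For a finite core `D` with element `c`: two tuples that agree off `c` and define
endomorphisms when their value at `c` is `a` resp. `b` exist iff `a = b` and some
automorphism of `D` sends `c` to `a`.  (This is the simple definability of `=_c`.) -/
theorem core_eq_c_simple_definition {D : Type*} [Fintype D] [DecidableEq D]
    {ι : Type*} {ar : ι → ℕ} (Rel : ∀ i, Set (Fin (ar i) → D))
    (hcore : ∀ g : D → D, IsEndo Rel g → Function.Bijective g)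
    (c : D) (a b : D) :
    (∃ x : D → D, IsEndo Rel (Function.update x c a) ∧ IsEndo Rel (Function.update x c b))
      ↔ (a = b ∧ ∃ f : D → D, IsEndo Rel f ∧ Function.Bijective f ∧ f c = a) :=
  core_eq_c_simple_definition_general Rel hcore c a b
end

section
/- Let D be a finite structure with a ternary dual discriminator polymorphism T (T(x,y,z) = the repeated value among x,y,z if one exists, else x). If R ⊆ Dⁿ is preserved by T, then R is determined by its binary projections: for any tuple a ∈ Dⁿ, if π_{i,j}(a) ∈ π_{i,j}(R) for all pairs i,j, then a ∈ R. -/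
/-!
The dual discriminator is a majority operation, and relations preserved by a majority operation
are determined by their binary projections (Baker–Pixley). By induction on a finite set `J`, for
all coordinates `i, j` some tuple of `R` agrees with `a` on `J ∪ {i, j}`: to add a coordinate `k`,
take such tuples for the pairs `(i, j)`, `(i, k)`, `(j, k)` and combine them by the majority
operation; at every coordinate of `J ∪ {i, j, k}` at least two of them agree with `a`.
-/

/-- The dual discriminator: the repeated value among `x, y, z` if there is one, else `x`. -/
def dualDiscriminator {D : Type*} [DecidableEq D] (x y z : D) : D :=
  if y = z then y else x

structure IsMajority {D : Type*} (m : D → D → D → D) : Prop where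
  xxy : ∀ x y, m x x y = x
  xyx : ∀ x y, m x y x = x
  yxx : ∀ x y, m y x x = x

theorem dualDiscriminator_isMajority {D : Type*} [DecidableEq D] :
    IsMajority (dualDiscriminator (D := D)) where
  xxy x y := by unfold dualDiscriminator; split_ifs <;> rfl
  xyx x y := by unfold dualDiscriminator; split_ifs with h <;> [exact h; rfl]
  yxx x y := if_pos rfl

namespace IsMajority

variable {ι D : Type*} {m : D → D → D → D} {R : Set (ι → D)} {a : ι → D}

theorem exists_mem_eq_on_pair_and_finset (hm : IsMajority m)
    (hR : ∀ x ∈ R, ∀ y ∈ R, ∀ z ∈ R, (fun l => m (x l) (y l) (z l)) ∈ R)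
    (ha : ∀ i j, ∃ b ∈ R, b i = a i ∧ b j = a j) [DecidableEq ι] (J : Finset ι) :
    ∀ i j, ∃ b ∈ R, b i = a i ∧ b j = a j ∧ ∀ l ∈ J, b l = a l := by
  induction J using Finset.induction_on with
  | empty => simpa using ha
  | insert k J _ IH =>
    intro i j
    obtain ⟨x, hxR, hxi, hxj, hxJ⟩ := IH i j
    obtain ⟨y, hyR, hyi, hyk, hyJ⟩ := IH i k
    obtain ⟨z, hzR, hzj, hzk, hzJ⟩ := IH j k
    refine ⟨_, hR x hxR y hyR z hzR, ?_, ?_, ?_⟩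
    · simp only [hxi, hyi, hm.xxy]
    · simp only [hxj, hzj, hm.xyx]
    · intro l hl
      rcases Finset.mem_insert.mp hl with rfl | hl
      · simp only [hyk, hzk, hm.yxx]
      · simp only [hxJ l hl, hyJ l hl, hm.xxy]

theorem mem_of_forall_pair [Fintype ι] [Nonempty ι] (hm : IsMajority m)
    (hR : ∀ x ∈ R, ∀ y ∈ R, ∀ z ∈ R, (fun l => m (x l) (y l) (z l)) ∈ R)
    (ha : ∀ i j, ∃ b ∈ R, b i = a i ∧ b j = a j) : a ∈ R := by
  classical
  obtain ⟨b, hbR, -, -, hb⟩ := hm.exists_mem_eq_on_pair_and_finset hR ha Finset.univ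
    (Classical.arbitrary ι) (Classical.arbitrary ι)
  rwa [← funext fun l => hb l (Finset.mem_univ l)]

end IsMajority

theorem dual_discriminator_binary_projections_general {D : Type*} [DecidableEq D]
    {n : ℕ} (hn : 0 < n) (R : Set (Fin n → D))
    (hR : ∀ x ∈ R, ∀ y ∈ R, ∀ z ∈ R,
      (fun i => dualDiscriminator (x i) (y i) (z i)) ∈ R)
    (a : Fin n → D)
    (ha : ∀ i j : Fin n, ∃ b ∈ R, b i = a i ∧ b j = a j) :
    a ∈ R :=
  have : Nonempty (Fin n) := ⟨⟨0, hn⟩⟩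
  dualDiscriminator_isMajority.mem_of_forall_pair hR ha

/-- A relation preserved by the dual discriminator is determined by its binary projections:
if every pair of coordinates of `a` is matched by some tuple of `R`, then `a ∈ R`. -/
theorem dual_discriminator_binary_projections {D : Type*} [Fintype D] [DecidableEq D]
    {n : ℕ} (hn : 0 < n) (R : Set (Fin n → D))
    (hR : ∀ x ∈ R, ∀ y ∈ R, ∀ z ∈ R,
      (fun i => dualDiscriminator (x i) (y i) (z i)) ∈ R)
    (a : Fin n → D)
    (ha : ∀ i j : Fin n, ∃ b ∈ R, b i = a i ∧ b j = a j) :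
    a ∈ R :=
  dual_discriminator_binary_projections_general hn R hR a ha
end

section
/- Every Baire measurable function g : {1,...,n}^ℕ → D (D finite) is constant on some 'fan': there exist σ ∈ {1,...,n}^{<ℕ} (from any fixed dense family of finite strings) and t ∈ {1,...,n}^ℕ such that g(σ ⌢ ⟨1⟩ ⌢ t) = g(σ ⌢ ⟨2⟩ ⌢ t) = ... = g(σ ⌢ ⟨n⟩ ⌢ t). -/
/-!
Some fibre `S = g ⁻¹' {a}` is nonmeagre, so, being Baire measurable, it is comeagre in a nonempty
open set `U`, and `U` contains the cylinder of some `σᵢ`. Each map `t ↦ σᵢ ⌢ ⟨k⟩ ⌢ t` is an open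
embedding into that cylinder, so it pulls `S` back to a comeagre set; the `n` pullbacks have a
common point `t`.
-/

/-- The point `σ ⌢ ⟨k⟩ ⌢ t` of `(Fin n)^ℕ`: the finite string `σ` of length `i`, followed by
the single symbol `k`, followed by the infinite string `t`. -/
def fanPoint {n : ℕ} (i : ℕ) (σ : Fin i → Fin n) (k : Fin n) (t : ℕ → Fin n) : ℕ → Fin n :=
  fun m => if h : m < i then σ ⟨m, h⟩ else if m = i then k else t (m - i - 1)

open Filter Function Set Topology PiNat

section Baire

variable {X : Type*} [TopologicalSpace X]

theorem exists_not_isMeagre_preimage_singleton [BaireSpace X] [Nonempty X] {D : Type*}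
    [Countable D] (g : X → D) : ∃ a, ¬ IsMeagre (g ⁻¹' {a}) := by
  by_contra! h
  have hcover : (⋃ a, g ⁻¹' {a}) = univ := by
    rw [← preimage_iUnion, iUnion_of_singleton, preimage_univ]
  exact not_isMeagre_of_isOpen isOpen_univ univ_nonempty (hcover ▸ isMeagre_iUnion h)

theorem BaireMeasurableSet.exists_isOpen_nonempty_residualEq {s : Set X}
    (hs : BaireMeasurableSet s) (h : ¬ IsMeagre s) : ∃ u, IsOpen u ∧ u.Nonempty ∧ s =ᵇ u := by
  obtain ⟨u, hu, hsu⟩ := hs.residualEq_isOpen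
  refine ⟨u, hu, nonempty_iff_ne_empty.2 ?_, hsu⟩
  rintro rfl
  exact h (hsu.compl.mem_iff.mono fun x hx => hx.2 (notMem_empty x))

end Baire

section Cylinder

variable {α : Type*} [TopologicalSpace α] [DiscreteTopology α]

theorem exists_cylinder_subset {u : Set (ℕ → α)} (hu : IsOpen u) {x : ℕ → α} (hx : x ∈ u) :
    ∃ N, cylinder x N ⊆ u := by
  obtain ⟨_, ⟨y, N, rfl⟩, hxy, hyu⟩ :=
    (isTopologicalBasis_cylinders fun _ => α).exists_subset_of_mem_open hx hu
  exact ⟨N, (mem_cylinder_iff_eq.1 hxy).symm ▸ hyu⟩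

end Cylinder

section FanPoint

variable {n i : ℕ} {σ : Fin i → Fin n} {k : Fin n}

theorem fanPoint_of_lt (t : ℕ → Fin n) {m : ℕ} (hm : m < i) :
    fanPoint i σ k t m = σ ⟨m, hm⟩ := by
  simp [fanPoint, hm]

theorem fanPoint_self (t : ℕ → Fin n) : fanPoint i σ k t i = k := by
  simp [fanPoint]

theorem fanPoint_add (t : ℕ → Fin n) (m : ℕ) : fanPoint i σ k t (i + 1 + m) = t m := by
  simp [fanPoint, show ¬ i + 1 + m < i by omega, show i + 1 + m ≠ i by omega,
    show i + 1 + m - i - 1 = m by omega]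

theorem continuous_fanPoint : Continuous (fanPoint i σ k) :=
  continuous_pi fun m => by unfold fanPoint; split_ifs <;> fun_prop

theorem leftInverse_fanPoint : LeftInverse (fun y m => y (i + 1 + m)) (fanPoint i σ k) :=
  fun t => funext (fanPoint_add t)

theorem range_fanPoint (t : ℕ → Fin n) :
    range (fanPoint i σ k) = cylinder (fanPoint i σ k t) (i + 1) := by
  ext y
  simp only [mem_range, mem_cylinder_iff]
  constructor
  · rintro ⟨s, rfl⟩ m hm
    rcases Nat.lt_succ_iff_lt_or_eq.1 hm with hm | rfl
    · rw [fanPoint_of_lt s hm, fanPoint_of_lt t hm]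
    · rw [fanPoint_self, fanPoint_self]
  · intro hy
    refine ⟨fun m => y (i + 1 + m), funext fun m => ?_⟩
    rcases lt_trichotomy m i with hm | rfl | hm
    · rw [fanPoint_of_lt _ hm, hy m (by omega), fanPoint_of_lt t hm]
    · rw [fanPoint_self, hy m (by omega), fanPoint_self]
    · obtain ⟨j, rfl⟩ := Nat.exists_eq_add_of_lt hm
      rw [show i + j + 1 = i + 1 + j by omega, fanPoint_add]

theorem isOpenEmbedding_fanPoint : IsOpenEmbedding (fanPoint i σ k) :=
  ⟨leftInverse_fanPoint.isEmbedding (continuous_pi fun _ => continuous_apply _)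
    continuous_fanPoint, range_fanPoint (fun _ => k) ▸ isOpen_cylinder _ _ _⟩

theorem fanPoint_mem_cylinder {N : ℕ} {x : ℕ → Fin n} (hN : N ≤ i)
    (hσ : ∀ j : Fin N, σ (Fin.castLE hN j) = x j) (t : ℕ → Fin n) :
    fanPoint i σ k t ∈ cylinder x N := fun m hm => by
  rw [fanPoint_of_lt t (hm.trans_le hN)]
  exact hσ ⟨m, hm⟩

end FanPoint

/-- Every Baire measurable function `g : {1,...,n}^ℕ → D` (`D` finite) is constant on some
fan: there are a string `σᵢ` from the fixed dense family and a tail `t` such that all the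
values `g (σᵢ ⌢ ⟨k⟩ ⌢ t)`, `k = 1,...,n`, coincide. -/
theorem baire_measurable_constant_on_fan {n : ℕ} (hn : 0 < n)
    {D : Type*} [Finite D]
    (σ : (i : ℕ) → Fin i → Fin n)
    (hdense : ∀ (m : ℕ) (s : Fin m → Fin n),
      ∃ i, ∃ h : m ≤ i, ∀ j : Fin m, σ i (Fin.castLE h j) = s j)
    (g : (ℕ → Fin n) → D)
    (hg : ∀ a : D, BaireMeasurableSet (g ⁻¹' {a})) :
    ∃ (i : ℕ) (t : ℕ → Fin n), ∀ k₁ k₂ : Fin n,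
      g (fanPoint i (σ i) k₁ t) = g (fanPoint i (σ i) k₂ t) := by
  have : Nonempty (Fin n) := ⟨⟨0, hn⟩⟩
  obtain ⟨a, ha⟩ := exists_not_isMeagre_preimage_singleton g
  obtain ⟨U, hUo, ⟨x, hxU⟩, hgU⟩ := (hg a).exists_isOpen_nonempty_residualEq ha
  obtain ⟨N, hNU⟩ := exists_cylinder_subset hUo hxU
  obtain ⟨i, hNi, hσ⟩ := hdense N (fun j => x j)
  have hfibre (k : Fin n) : ∀ᶠ t in residual (ℕ → Fin n), g (fanPoint i (σ i) k t) = a := by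
    have hopen := isOpenEmbedding_fanPoint (σ := σ i) (k := k)
    filter_upwards [(tendsto_residual_of_isOpenMap hopen.continuous hopen.isOpenMap).eventually
      hgU.mem_iff] with t ht
    exact ht.2 (hNU (fanPoint_mem_cylinder hNi hσ t))
  obtain ⟨t, ht⟩ := (dense_of_mem_residual (eventually_all.2 hfibre)).nonempty
  exact ⟨i, t, fun k₁ k₂ => (ht k₁).trans (ht k₂).symm⟩
end

section
/- Let H (the inverter gadget) be the graph on 12 internal vertices with 5 pendant coding edges a,b,c,d,e as in Figure 1 [explicit edge list: vertices v₁..v₁₂ with a = {u_a, v₆}, b = {u_b, v₇}, e = {u_e, v₉}, c = {u_c, v₁₁}, d = {u_d, v₁₂}, and internal edges {v₆,v₈},{v₆,v₁₁},{v₇,v₁₀},{v₇,v₁₂},{v₈,v₉},{v₈,v₁₂},{v₉,v₁₀},{v₁₀,v₁₁}]. Then a proper edge 3-coloring f of the coding edges a,b,c,d,e extends to a proper edge 3-coloring of H if and only if either [f(a) = f(b) and f(c), f(d), f(e) are pairwise distinct] or [f(c) = f(d) and f(a), f(b), f(e) are pairwise distinct]. -/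
/-- The edges of the inverter gadget `H`.  Vertices `0,...,11` are the internal vertices
`v₁,...,v₁₂` and `12,...,16` are the pendant endpoints of the coding edges.
Edges `0,1,2,3,4` are the coding edges `a, b, c, d, e` respectively, with internal
endpoints `v₆, v₇, v₁₁, v₁₂, v₉`; edges `5,...,12` are the internal edges. -/
def inverterEdges : Fin 13 → Fin 17 × Fin 17 :=
  ![(12, 5), (13, 6), (14, 10), (15, 11), (16, 8),
    (5, 7), (5, 10), (6, 9), (6, 11), (7, 8), (7, 11), (8, 9), (9, 10)]

/-- Two edges of the gadget share an endpoint. -/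
def sharesEndpoint (e e' : Fin 13) : Prop :=
  (inverterEdges e).1 = (inverterEdges e').1 ∨ (inverterEdges e).1 = (inverterEdges e').2 ∨
  (inverterEdges e).2 = (inverterEdges e').1 ∨ (inverterEdges e).2 = (inverterEdges e').2

/-- `φ` is a proper edge 3-coloring of the inverter gadget. -/
def IsProperEdgeColoring (φ : Fin 13 → Fin 3) : Prop :=
  ∀ e e' : Fin 13, e ≠ e' → sharesEndpoint e e' → φ e ≠ φ e'

/-!
Every internal vertex of the gadget has degree 3, so a proper edge 3-coloring gives its three
edges all three colors; in `Fin 3` the color of one of them is then minus the sum of the other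
two. Propagating this from vertex to vertex, a proper coloring is determined by the colors of six
internal edges, and the colors of the coding edges become explicit functions of these six; the
`3 ^ 6` choices are checked directly. Conversely, the pattern arises in six ways (which of
`c, d, e` equals `a = b`, or which of `a, b, e` equals `c = d`), and in each of them an explicit
extension, written in terms of the given colors, is proper.
-/

lemma List.nodup_three {α : Type*} {x y z : α} : [x, y, z].Nodup ↔ x ≠ y ∧ x ≠ z ∧ y ≠ z := by
  simp [and_assoc]

lemma Fin.eq_neg_add_of_nodup {x y z : Fin 3} (h : [x, y, z].Nodup) : x = -(y + z) := by
  revert x y z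
  decide

lemma Fin.eq_or_eq_or_eq_of_ne {x y z : Fin 3} (hxy : x ≠ y) (hyz : y ≠ z) (hxz : x ≠ z)
    (w : Fin 3) : w = x ∨ w = y ∨ w = z := by
  omega

instance (e e' : Fin 13) : Decidable (sharesEndpoint e e') := by
  unfold sharesEndpoint
  infer_instance

-- The conjuncts are the stars of `v₆, v₇, v₁₁, v₁₂, v₉, v₈, v₁₀`.
lemma isProperEdgeColoring_iff (φ : Fin 13 → Fin 3) :
    IsProperEdgeColoring φ ↔
      [φ 0, φ 5, φ 6].Nodup ∧ [φ 1, φ 7, φ 8].Nodup ∧ [φ 2, φ 6, φ 12].Nodup ∧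
        [φ 3, φ 8, φ 10].Nodup ∧ [φ 4, φ 9, φ 11].Nodup ∧ [φ 10, φ 5, φ 9].Nodup ∧
        [φ 7, φ 11, φ 12].Nodup := by
  simp only [List.nodup_three]
  constructor
  · intro h
    refine ⟨⟨?_, ?_, ?_⟩, ⟨?_, ?_, ?_⟩, ⟨?_, ?_, ?_⟩, ⟨?_, ?_, ?_⟩, ⟨?_, ?_, ?_⟩, ⟨?_, ?_, ?_⟩,
      ⟨?_, ?_, ?_⟩⟩ <;> apply h <;> decide
  · rintro ⟨⟨h0_5, h0_6, h5_6⟩, ⟨h1_7, h1_8, h7_8⟩, ⟨h2_6, h2_12, h6_12⟩, ⟨h3_8, h3_10, h8_10⟩,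
      ⟨h4_9, h4_11, h9_11⟩, ⟨h10_5, h10_9, h5_9⟩, ⟨h7_11, h7_12, h11_12⟩⟩ e e' hne hs
    fin_cases e <;> fin_cases e' <;>
      first | exact absurd hs (by decide) | exact absurd rfl hne | assumption | exact Ne.symm ‹_›

lemma coding_pattern_of_nodup {a b c d e p q r s t u w z : Fin 3}
    (ha : [a, p, q].Nodup) (hb : [b, r, s].Nodup) (hc : [c, q, z].Nodup) (hd : [d, s, u].Nodup)
    (he : [e, t, w].Nodup) (hu : [u, p, t].Nodup) (hr : [r, w, z].Nodup) :
    (a = b ∧ c ≠ d ∧ d ≠ e ∧ c ≠ e) ∨ (c = d ∧ a ≠ b ∧ b ≠ e ∧ a ≠ e) := by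
  obtain rfl := Fin.eq_neg_add_of_nodup ha
  obtain rfl := Fin.eq_neg_add_of_nodup hb
  obtain rfl := Fin.eq_neg_add_of_nodup hc
  obtain rfl := Fin.eq_neg_add_of_nodup hd
  obtain rfl := Fin.eq_neg_add_of_nodup he
  obtain rfl := Fin.eq_neg_add_of_nodup hu
  obtain rfl := Fin.eq_neg_add_of_nodup hr
  revert p q s t w z
  decide

lemma coding_pattern_of_isProperEdgeColoring {φ : Fin 13 → Fin 3} (hφ : IsProperEdgeColoring φ) :
    (φ 0 = φ 1 ∧ φ 2 ≠ φ 3 ∧ φ 3 ≠ φ 4 ∧ φ 2 ≠ φ 4) ∨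
      (φ 2 = φ 3 ∧ φ 0 ≠ φ 1 ∧ φ 1 ≠ φ 4 ∧ φ 0 ≠ φ 4) := by
  obtain ⟨ha, hb, hc, hd, he, hu, hr⟩ := (isProperEdgeColoring_iff φ).mp hφ
  exact coding_pattern_of_nodup ha hb hc hd he hu hr

lemma exists_isProperEdgeColoring_of_coding_pattern {a b c d e : Fin 3}
    (h : (a = b ∧ c ≠ d ∧ d ≠ e ∧ c ≠ e) ∨ (c = d ∧ a ≠ b ∧ b ≠ e ∧ a ≠ e)) :
    ∃ φ, IsProperEdgeColoring φ ∧ φ 0 = a ∧ φ 1 = b ∧ φ 2 = c ∧ φ 3 = d ∧ φ 4 = e := by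
  rcases h with ⟨rfl, hcd, hde, hce⟩ | ⟨rfl, hab, hbe, hae⟩
  · rcases Fin.eq_or_eq_or_eq_of_ne hcd hde hce a with rfl | rfl | rfl
    · refine ⟨![a, a, a, d, e, e, d, d, e, d, a, a, e], ?_, rfl, rfl, rfl, rfl, rfl⟩
      simp [isProperEdgeColoring_iff, *, Ne.symm]
    · refine ⟨![a, a, c, a, e, c, e, e, c, a, e, c, a], ?_, rfl, rfl, rfl, rfl, rfl⟩
      simp [isProperEdgeColoring_iff, *, Ne.symm]
    · refine ⟨![a, a, c, d, a, c, d, d, c, d, a, c, a], ?_, rfl, rfl, rfl, rfl, rfl⟩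
      simp [isProperEdgeColoring_iff, *, Ne.symm]
  · rcases Fin.eq_or_eq_or_eq_of_ne hab hbe hae c with rfl | rfl | rfl
    · refine ⟨![c, b, c, c, e, e, b, c, e, c, b, b, e], ?_, rfl, rfl, rfl, rfl, rfl⟩
      simp [isProperEdgeColoring_iff, *, Ne.symm]
    · refine ⟨![a, c, c, c, e, c, e, e, a, a, e, c, a], ?_, rfl, rfl, rfl, rfl, rfl⟩
      simp [isProperEdgeColoring_iff, *, Ne.symm]
    · refine ⟨![a, b, c, c, c, c, b, c, a, a, b, b, a], ?_, rfl, rfl, rfl, rfl, rfl⟩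
      simp [isProperEdgeColoring_iff, *, Ne.symm]

/-- Inverter lemma: a 3-coloring `f` of the coding edges `a, b, c, d, e` extends to a proper
edge 3-coloring of the gadget `H` iff either `f(a) = f(b)` and `f(c), f(d), f(e)` are
pairwise distinct, or `f(c) = f(d)` and `f(a), f(b), f(e)` are pairwise distinct. -/
theorem inverter_lemma (f : Fin 5 → Fin 3) :
    (∃ φ : Fin 13 → Fin 3, IsProperEdgeColoring φ ∧
        ∀ i : Fin 5, φ (Fin.castLE (by norm_num) i) = f i) ↔
      ((f 0 = f 1 ∧ f 2 ≠ f 3 ∧ f 3 ≠ f 4 ∧ f 2 ≠ f 4) ∨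
        (f 2 = f 3 ∧ f 0 ≠ f 1 ∧ f 1 ≠ f 4 ∧ f 0 ≠ f 4)) := by
  constructor
  · rintro ⟨φ, hφ, hf⟩
    obtain ⟨h0, h1, h2, h3, h4⟩ : φ 0 = f 0 ∧ φ 1 = f 1 ∧ φ 2 = f 2 ∧ φ 3 = f 3 ∧ φ 4 = f 4 :=
      ⟨hf 0, hf 1, hf 2, hf 3, hf 4⟩
    rw [← h0, ← h1, ← h2, ← h3, ← h4]
    exact coding_pattern_of_isProperEdgeColoring hφ
  · intro h
    obtain ⟨φ, hφ, h0, h1, h2, h3, h4⟩ := exists_isProperEdgeColoring_of_coding_pattern h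
    exact ⟨φ, hφ, fun i => by fin_cases i <;> assumption⟩
end

section
/- Let A be a finite idempotent algebra, B ≤ Aⁿ a subalgebra, and f : B → X a surjective homomorphism onto a nontrivial algebra X. Choose I ⊆ {1,...,n} maximal such that for some tuple ā ∈ A^I, f is not constant on B' := {b ∈ B : π_I(b) = ā}. Then B' is a subalgebra of B, and f restricted to B' factors through the projection π_j for any single coordinate j ∉ I (when I ≠ {1,...,n}); consequently a nontrivial homomorphic image of X is a homomorphic image of the subalgebra π_j(B') ≤ A. -/
/-!
Idempotence makes every set of tuples with prescribed values on `I` a subalgebra, so the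
fiber `B'` is a subalgebra of `B`. Two tuples of `B'` that also agree at `j ∉ I` lie in a
common fiber over `I ∪ {j}`, on which `f` is constant by maximality of `I`; hence `f` factors
through the projection `π_j`, which is a homomorphism, so the factor is a homomorphism on
`π_j(B')` whose image is `f(B')`, a set with two points by the choice of `I`.
-/

open Function Set

section HSLemma

variable {ι : Type*} {ar : ι → ℕ} {α β X : Type*}

def IsClosedUnder (op : ∀ i, (Fin (ar i) → α) → α) (S : Set α) : Prop :=
  ∀ i (t : Fin (ar i) → α), (∀ m, t m ∈ S) → op i t ∈ S

def IsHomOn (opα : ∀ i, (Fin (ar i) → α) → α) (opX : ∀ i, (Fin (ar i) → X) → X)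
    (S : Set α) (f : α → X) : Prop :=
  ∀ i (t : Fin (ar i) → α), (∀ m, t m ∈ S) → f (opα i t) = opX i (fun m => f (t m))

def pointwiseOp (op : ∀ i, (Fin (ar i) → α) → α) (κ : Type*) :
    ∀ i, (Fin (ar i) → κ → α) → κ → α :=
  fun i t q => op i (fun m => t m q)

theorem IsClosedUnder.inter {op : ∀ i, (Fin (ar i) → α) → α} {S T : Set α}
    (hS : IsClosedUnder op S) (hT : IsClosedUnder op T) : IsClosedUnder op (S ∩ T) :=
  fun i t ht => ⟨hS i t fun m => (ht m).1, hT i t fun m => (ht m).2⟩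

theorem isClosedUnder_pointwiseOp_setOf_eqOn {κ : Type*} {op : ∀ i, (Fin (ar i) → α) → α}
    (hidem : ∀ i (a : α), op i (fun _ => a) = a) (I : Set κ) (c : κ → α) :
    IsClosedUnder (pointwiseOp op κ) {b | EqOn b c I} := by
  intro i t ht k hk
  have hconst : (fun m => t m k) = fun _ => c k := funext fun m => ht m hk
  simp only [pointwiseOp, hconst, hidem]

theorem IsHomOn.mono {opα : ∀ i, (Fin (ar i) → α) → α} {opX : ∀ i, (Fin (ar i) → X) → X}
    {S T : Set α} {f : α → X} (hf : IsHomOn opα opX T f) (hST : S ⊆ T) :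
    IsHomOn opα opX S f :=
  fun i t ht => hf i t fun m => hST (ht m)

theorem isHomOn_pointwiseOp_eval {κ : Type*} (op : ∀ i, (Fin (ar i) → α) → α) (S : Set (κ → α))
    (j : κ) : IsHomOn (pointwiseOp op κ) op S (fun b => b j) :=
  fun _ _ _ => rfl

theorem IsHomOn.of_comp_eqOn {opα : ∀ i, (Fin (ar i) → α) → α}
    {opβ : ∀ i, (Fin (ar i) → β) → β} {opX : ∀ i, (Fin (ar i) → X) → X}
    {S : Set α} {p : α → β} {f : α → X} {g : β → X} (hS : IsClosedUnder opα S)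
    (hp : IsHomOn opα opβ S p) (hf : IsHomOn opα opX S f) (hgp : ∀ b ∈ S, g (p b) = f b) :
    IsHomOn opβ opX (p '' S) g := by
  intro i t ht
  choose s hs hst using ht
  obtain rfl : t = fun m => p (s m) := funext fun m => (hst m).symm
  rw [← hp i s hs, hgp _ (hS i s hs), hf i s hs]
  simp only [hgp _ (hs _)]

theorem exists_comp_eqOn_of_eq_of_eq [Nonempty X] {S : Set α} {p : α → β} {f : α → X}
    (hfac : ∀ b ∈ S, ∀ b' ∈ S, p b = p b' → f b = f b') :
    ∃ g : β → X, ∀ b ∈ S, g (p b) = f b :=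
  have hfac' : FactorsThrough (S.domRestrict f) (S.domRestrict p) :=
    fun b b' h => hfac b b.2 b' b'.2 h
  ⟨extend (S.domRestrict p) (S.domRestrict f) (fun _ => Classical.arbitrary X),
    fun b hb => hfac'.extend_apply _ ⟨b, hb⟩⟩

theorem eq_of_eq_apply_of_constant_on_fibers_insert {κ : Type*} {B : Set (κ → α)}
    {f : (κ → α) → X} {I : Set κ} {j : κ} (hj : j ∉ I)
    (hconst : ∀ c : κ → α, ∀ b ∈ B, ∀ b' ∈ B,
      (∀ i ∈ insert j I, b i = c i) → (∀ i ∈ insert j I, b' i = c i) → f b = f b')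
    {c : κ → α} {b b' : κ → α} (hb : b ∈ B ∩ {b | EqOn b c I}) (hb' : b' ∈ B ∩ {b | EqOn b c I})
    (hbj : b j = b' j) : f b = f b' := by
  classical
  have hupdate : ∀ d ∈ B ∩ {b | EqOn b c I}, ∀ i ∈ insert j I, d i = update c j (d j) i := by
    rintro d ⟨-, hd⟩ i (rfl | hi)
    · rw [update_self]
    · rw [update_of_ne (ne_of_mem_of_not_mem hi hj), hd hi]
  exact hconst _ b hb.1 b' hb'.1 (hupdate b hb) (hbj ▸ hupdate b' hb')

end HSLemma

theorem bulatov_jeavons_HS_lemma_general {A X : Type*}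
    {ι : Type*} {ar : ι → ℕ}
    (opA : ∀ i, (Fin (ar i) → A) → A) (opX : ∀ i, (Fin (ar i) → X) → X)
    (hidem : ∀ i (a : A), opA i (fun _ => a) = a)
    {n : ℕ} (B : Set (Fin n → A))
    (hB : ∀ i (t : Fin (ar i) → (Fin n → A)), (∀ m, t m ∈ B) →
      (fun q => opA i (fun m => t m q)) ∈ B)
    (f : (Fin n → A) → X)
    (hf : ∀ i (t : Fin (ar i) → (Fin n → A)), (∀ m, t m ∈ B) →
      f (fun q => opA i (fun m => t m q)) = opX i (fun m => f (t m)))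
    (I : Set (Fin n)) (abar : Fin n → A)
    (B' : Set (Fin n → A)) (hB' : B' = {b ∈ B | ∀ i ∈ I, b i = abar i})
    (hnc : ¬ ∀ b ∈ B', ∀ b' ∈ B', f b = f b')
    (hmax : ∀ J : Set (Fin n), I ⊆ J → I ≠ J → ∀ c : Fin n → A,
      ∀ b ∈ B, ∀ b' ∈ B, (∀ i ∈ J, b i = c i) → (∀ i ∈ J, b' i = c i) → f b = f b') :
    (∀ i (t : Fin (ar i) → (Fin n → A)), (∀ m, t m ∈ B') →
      (fun q => opA i (fun m => t m q)) ∈ B') ∧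
    ∀ j ∉ I,
      (∀ b ∈ B', ∀ b' ∈ B', b j = b' j → f b = f b') ∧
      ∃ g : A → X,
        (∀ b ∈ B', g (b j) = f b) ∧
        (∀ i (t : Fin (ar i) → A), (∀ m, t m ∈ (fun b => b j) '' B') →
          g (opA i t) = opX i (fun m => g (t m))) ∧
        ¬ (g '' ((fun b => b j) '' B')).Subsingleton := by
  have hB'eq : B' = B ∩ {b | EqOn b abar I} := hB'
  have hB'closed : IsClosedUnder (pointwiseOp opA (Fin n)) B' :=
    hB'eq ▸ IsClosedUnder.inter hB (isClosedUnder_pointwiseOp_setOf_eqOn hidem I abar)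
  refine ⟨hB'closed, fun j hj => ?_⟩
  have hfac : ∀ b ∈ B', ∀ b' ∈ B', b j = b' j → f b = f b' := by
    rw [hB'eq]
    exact fun b hb b' hb' => eq_of_eq_apply_of_constant_on_fibers_insert hj
      (hmax _ (subset_insert j I) (ne_insert_of_notMem I hj)) hb hb'
  have : Nonempty X := not_isEmpty_iff.mp fun _ => hnc fun b _ => isEmptyElim (f b)
  obtain ⟨g, hg⟩ := exists_comp_eqOn_of_eq_of_eq hfac
  refine ⟨hfac, g, hg, IsHomOn.of_comp_eqOn hB'closed (isHomOn_pointwiseOp_eval opA B' j)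
    (IsHomOn.mono hf (hB'eq ▸ inter_subset_left)) hg, ?_⟩
  rw [image_image, image_congr hg]
  exact fun hsub => hnc fun b hb b' hb' => hsub (mem_image_of_mem f hb) (mem_image_of_mem f hb')

/-- Bulatov–Jeavons HS lemma.  `A` is a finite idempotent algebra (operations `opA`),
`B ≤ Aⁿ` a subalgebra, `f : B → X` a surjective homomorphism onto a nontrivial algebra
`X` (operations `opX`).  If `I` is maximal such that `f` is not constant on the fiber
`B' = {b ∈ B : π_I b = ā}`, then `B'` is a subalgebra and, for every coordinate `j ∉ I`,
`f` restricted to `B'` factors through `π_j`; consequently a nontrivial homomorphic image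
of `X` is a homomorphic image of the subalgebra `π_j(B') ≤ A`. -/
theorem bulatov_jeavons_HS_lemma {A X : Type*} [Fintype A]
    {ι : Type*} {ar : ι → ℕ}
    (opA : ∀ i, (Fin (ar i) → A) → A) (opX : ∀ i, (Fin (ar i) → X) → X)
    (hidem : ∀ i (a : A), opA i (fun _ => a) = a)
    {n : ℕ} (B : Set (Fin n → A))
    (hB : ∀ i (t : Fin (ar i) → (Fin n → A)), (∀ m, t m ∈ B) →
      (fun q => opA i (fun m => t m q)) ∈ B)
    (f : (Fin n → A) → X)
    (hf : ∀ i (t : Fin (ar i) → (Fin n → A)), (∀ m, t m ∈ B) →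
      f (fun q => opA i (fun m => t m q)) = opX i (fun m => f (t m)))
    (hsurj : ∀ x : X, ∃ b ∈ B, f b = x)
    (hX : ∃ x y : X, x ≠ y)
    (I : Set (Fin n)) (abar : Fin n → A)
    (B' : Set (Fin n → A)) (hB' : B' = {b ∈ B | ∀ i ∈ I, b i = abar i})
    (hnc : ¬ ∀ b ∈ B', ∀ b' ∈ B', f b = f b')
    (hmax : ∀ J : Set (Fin n), I ⊆ J → I ≠ J → ∀ c : Fin n → A,
      ∀ b ∈ B, ∀ b' ∈ B, (∀ i ∈ J, b i = c i) → (∀ i ∈ J, b' i = c i) → f b = f b') :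
    (∀ i (t : Fin (ar i) → (Fin n → A)), (∀ m, t m ∈ B') →
      (fun q => opA i (fun m => t m q)) ∈ B') ∧
    ∀ j ∉ I,
      (∀ b ∈ B', ∀ b' ∈ B', b j = b' j → f b = f b') ∧
      ∃ g : A → X,
        (∀ b ∈ B', g (b j) = f b) ∧
        (∀ i (t : Fin (ar i) → A), (∀ m, t m ∈ (fun b => b j) '' B') →
          g (opA i t) = opX i (fun m => g (t m))) ∧
        ¬ (g '' ((fun b => b j) '' B')).Subsingleton :=
  bulatov_jeavons_HS_lemma_general opA opX hidem B hB f hf I abar B' hB' hnc hmax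
end

section
/- Suppose partial functions f₀, f₁, f₂, ... from a set X to a finite set D each satisfy: (i) functionality; (ii) for every constraint of the form R_{a,b}(x,y) ('x = a or y = b') in a fixed instance X, if x ∈ dom(fᵢ) and fᵢ(x) ≠ a then y ∈ dom(fᵢ) and fᵢ(y) = b, and symmetrically; (iii) for every constraint R_g(x,y) ('y = g(x)' for a permutation g of D), if x ∈ dom(fᵢ) then y ∈ dom(fᵢ) and fᵢ(y) = g(fᵢ(x)), and symmetrically; (iv) for every unary constraint U(x), if x ∈ dom(fᵢ) then fᵢ(x) ∈ U. If X = ⋃ᵢ dom(fᵢ), then the function f defined by f(x) = f_{n(x)}(x) where n(x) = min{i : x ∈ dom(fᵢ)} is a total solution: it satisfies all unary constraints, all constraints R_{a,b}, and all constraints R_g of the instance. -/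
/-!
Let `n(x)` be the first index at which `x` is defined. For a binary constraint on `(x, y)`,
compare `n(x)` and `n(y)` and apply the closure property of the earlier partial function:
it defines the other variable already at that index, which by minimality is then its first
index, so the value forced by the closure property is the value of the patched function.
-/

section

variable {ι X D : Type*} [LinearOrder ι]

def IsFirstValue (f : ι → X → Option D) (x : X) (i : ι) (d : D) : Prop :=
  f i x = some d ∧ ∀ j < i, f j x = none

namespace IsFirstValue

variable {f : ι → X → Option D} {x y : X} {i j : ι} {d e : D}

theorem eq_of_le (hy : IsFirstValue f y j e) (hij : i ≤ j) (h : f i y = some d) : d = e := by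
  rcases hij.lt_or_eq with hlt | rfl
  · simp [hy.2 i hlt] at h
  · exact Option.some_injective _ (h.symm.trans hy.1)

theorem or_of_closed {a b : D}
    (hxy : ∀ i d, f i x = some d → d ≠ a → f i y = some b)
    (hyx : ∀ i e, f i y = some e → e ≠ b → f i x = some a)
    (hx : IsFirstValue f x i d) (hy : IsFirstValue f y j e) : d = a ∨ e = b := by
  rcases le_total i j with hij | hji
  · by_cases hd : d = a
    · exact Or.inl hd
    · exact Or.inr (hy.eq_of_le hij (hxy i d hx.1 hd)).symm
  · by_cases he : e = b
    · exact Or.inr he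
    · exact Or.inl (hx.eq_of_le hji (hyx j e hy.1 he)).symm

theorem eq_perm_of_closed {g : Equiv.Perm D}
    (hxy : ∀ i d, f i x = some d → f i y = some (g d))
    (hyx : ∀ i e, f i y = some e → f i x = some (g.symm e))
    (hx : IsFirstValue f x i d) (hy : IsFirstValue f y j e) : e = g d := by
  rcases le_total i j with hij | hji
  · exact (hy.eq_of_le hij (hxy i d hx.1)).symm
  · rw [← hx.eq_of_le hji (hyx j e hy.1), Equiv.apply_symm_apply]

end IsFirstValue

end

theorem patching_partial_solutions_general {X D : Type*}
    (Uc : Set (X × Set D))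
    (Rab : Set (X × X × D × D))
    (Rg : Set (X × X × Equiv.Perm D))
    (f : ℕ → X → Option D)
    (hii : ∀ i x y a b, (x, y, a, b) ∈ Rab →
      (∀ d, f i x = some d → d ≠ a → f i y = some b) ∧
      (∀ d, f i y = some d → d ≠ b → f i x = some a))
    (hiii : ∀ i x y g, (x, y, g) ∈ Rg →
      (∀ d, f i x = some d → f i y = some (g d)) ∧
      (∀ d, f i y = some d → f i x = some (g.symm d)))
    (hiv : ∀ i x U, (x, U) ∈ Uc → ∀ d, f i x = some d → d ∈ U)
    (F : X → D)
    (hF : ∀ x, ∃ i, f i x = some (F x) ∧ ∀ j < i, f j x = none) :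
    (∀ x U, (x, U) ∈ Uc → F x ∈ U) ∧
    (∀ x y a b, (x, y, a, b) ∈ Rab → F x = a ∨ F y = b) ∧
    (∀ x y g, (x, y, g) ∈ Rg → F y = g (F x)) := by
  refine ⟨fun x U hU => ?_, fun x y a b hR => ?_, fun x y g hR => ?_⟩
  · obtain ⟨i, hx, -⟩ := hF x
    exact hiv i x U hU _ hx
  · obtain ⟨i, hx⟩ := hF x
    obtain ⟨j, hy⟩ := hF y
    exact IsFirstValue.or_of_closed (fun i => (hii i x y a b hR).1)
      (fun i => (hii i x y a b hR).2) hx hy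
  · obtain ⟨i, hx⟩ := hF x
    obtain ⟨j, hy⟩ := hF y
    exact IsFirstValue.eq_perm_of_closed (fun i => (hiii i x y g hR).1)
      (fun i => (hiii i x y g hR).2) hx hy

/-- Patching lemma for dual-discriminator style instances.  The instance has variables `X`
over a finite domain `D`, unary constraints `Uc`, constraints `R_{a,b}` (`x = a ∨ y = b`)
given by `Rab`, and constraints `R_g` (`y = g x`, `g` a permutation) given by `Rg`.
If the partial functions `fᵢ` each satisfy the closure properties (ii)–(iv) and their
domains cover `X`, then the function `F` with `F x = f_{n(x)} x` (where `n(x)` is the least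
index with `x ∈ dom fᵢ`) is a total solution. -/
theorem patching_partial_solutions {X D : Type*} [Finite D]
    (Uc : Set (X × Set D))
    (Rab : Set (X × X × D × D))
    (Rg : Set (X × X × Equiv.Perm D))
    (f : ℕ → X → Option D)
    (hii : ∀ i x y a b, (x, y, a, b) ∈ Rab →
      (∀ d, f i x = some d → d ≠ a → f i y = some b) ∧
      (∀ d, f i y = some d → d ≠ b → f i x = some a))
    (hiii : ∀ i x y g, (x, y, g) ∈ Rg →
      (∀ d, f i x = some d → f i y = some (g d)) ∧
      (∀ d, f i y = some d → f i x = some (g.symm d)))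
    (hiv : ∀ i x U, (x, U) ∈ Uc → ∀ d, f i x = some d → d ∈ U)
    (hcover : ∀ x, ∃ i, (f i x).isSome)
    (F : X → D)
    (hF : ∀ x, ∃ i, f i x = some (F x) ∧ ∀ j < i, f j x = none) :
    (∀ x U, (x, U) ∈ Uc → F x ∈ U) ∧
    (∀ x y a b, (x, y, a, b) ∈ Rab → F x = a ∨ F y = b) ∧
    (∀ x y g, (x, y, g) ∈ Rg → F y = g (F x)) :=
  patching_partial_solutions_general Uc Rab Rg f hii hiii hiv F hF
end
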